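/- arXiv:2011.10209 — 3 statements merged into one kernel-verified Lean document; each statement's English description precedes it below -/
import Mathlib

section
/- In the category Rel of sets and relations, the exponential functor ! mapping a set E to the set of finite multisets Mfin(E), and a relation s ⊆ E × F to !s = {([a₁,…,aₙ],[b₁,…,bₙ]) | n ∈ ℕ, ∀i (aᵢ,bᵢ) ∈ s}, is strict locally continuous: it is monotone on hom-sets, commutes with directed unions of relations, and maps set inclusions to set inclusions. -/
/-!
A pair of multisets in `!t` is witnessed by finitely many pairs of `t`. For a directed union
these finitely many pairs all lie in a single member of the family, which gives continuity by
induction on the multisets. For a diagonal relation `diagRel E`, forgetting the membership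
condition leaves `Multiset.Rel (· = ·)`, i.e. equality of multisets, while every element of
the first multiset is related to an element of the second, hence lies in `E`.
-/

universe u

/-- The diagonal (identity/inclusion) relation on a set `E`. -/
def diagRel {U : Type u} (E : Set U) : Set (U × U) :=
  {p | p.1 = p.2 ∧ p.1 ∈ E}

/-- The action of the exponential `!` of `Rel` on a relation `t ⊆ E × F`:
`!t` relates two finite multisets `[a₁,…,aₙ]` and `[b₁,…,bₙ]` when
`(aᵢ,bᵢ) ∈ t` for all `i`. -/
def bangRel {α β : Type u} (t : Set (α × β)) : Set (Multiset α × Multiset β) :=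
  {p | Multiset.Rel (fun a b => (a, b) ∈ t) p.1 p.2}

theorem mem_diagRel {U : Type u} {E : Set U} {a b : U} : (a, b) ∈ diagRel E ↔ a = b ∧ a ∈ E :=
  Iff.rfl

theorem mem_bangRel {α β : Type u} {t : Set (α × β)} {m₁ : Multiset α} {m₂ : Multiset β} :
    (m₁, m₂) ∈ bangRel t ↔ Multiset.Rel (fun a b => (a, b) ∈ t) m₁ m₂ :=
  Iff.rfl

theorem bangRel_mono {α β : Type u} {s t : Set (α × β)} (h : s ⊆ t) :
    bangRel s ⊆ bangRel t :=
  fun _ hp => hp.mono fun _ _ _ _ hab => h hab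

theorem bangRel_sUnion_subset_of_directedOn {α β : Type u} {D : Set (Set (α × β))}
    (hne : D.Nonempty) (hdir : DirectedOn (· ⊆ ·) D) :
    bangRel (⋃₀ D) ⊆ ⋃ s ∈ D, bangRel s := by
  rintro ⟨m₁, m₂⟩ hp
  rw [mem_bangRel] at hp
  induction hp with
  | zero =>
    obtain ⟨s, hs⟩ := hne
    exact Set.mem_biUnion hs Multiset.Rel.zero
  | cons hab _ ih =>
    obtain ⟨s₁, hs₁, hab₁⟩ := hab
    obtain ⟨s₂, hs₂, hrel₂⟩ := Set.mem_iUnion₂.mp ih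
    obtain ⟨s, hs, h₁, h₂⟩ := hdir s₁ hs₁ s₂ hs₂
    exact Set.mem_biUnion hs <|
      mem_bangRel.mpr (.cons (h₁ hab₁) (mem_bangRel.mp (bangRel_mono h₂ hrel₂)))

theorem bangRel_sUnion_of_directedOn {α β : Type u} {D : Set (Set (α × β))}
    (hne : D.Nonempty) (hdir : DirectedOn (· ⊆ ·) D) :
    bangRel (⋃₀ D) = ⋃ s ∈ D, bangRel s :=
  (bangRel_sUnion_subset_of_directedOn hne hdir).antisymm <|
    Set.iUnion₂_subset fun _ hs => bangRel_mono (Set.subset_sUnion_of_mem hs)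

theorem bangRel_diagRel {α : Type u} (E : Set α) :
    bangRel (diagRel E) = diagRel {m : Multiset α | ∀ a ∈ m, a ∈ E} := by
  ext ⟨m₁, m₂⟩
  rw [mem_bangRel, mem_diagRel]
  constructor
  · intro h
    refine ⟨Multiset.rel_eq.mp (h.mono fun _ _ _ _ hab => hab.1), fun a ha => ?_⟩
    obtain ⟨_, _, _, haE⟩ := Multiset.exists_mem_of_rel_of_mem h ha
    exact haE
  · rintro ⟨rfl, hE⟩
    exact Multiset.rel_refl_of_refl_on fun a ha => ⟨rfl, hE a ha⟩

/-- The exponential functor `!` of `Rel` (finite multisets) is strict locally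
continuous: monotone on hom-sets, commutes with directed unions of relations,
and maps set inclusions (diagonal relations) to set inclusions. -/
theorem bang_strict_locally_continuous :
    (∀ (α β : Type u) (s t : Set (α × β)), s ⊆ t → bangRel s ⊆ bangRel t) ∧
    (∀ (α β : Type u) (D : Set (Set (α × β))), D.Nonempty → DirectedOn (· ⊆ ·) D →
      bangRel (⋃₀ D) = ⋃ s ∈ D, bangRel s) ∧
    (∀ (α : Type u) (E : Set α),
      bangRel (diagRel E) = diagRel {m : Multiset α | ∀ a ∈ m, a ∈ E}) :=
  ⟨fun _ _ _ _ => bangRel_mono, fun _ _ _ => bangRel_sUnion_of_directedOn,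
    fun _ => bangRel_diagRel⟩
end

section
/- Let X and Y be non-uniform totality spaces and t ⊆ |X| × |Y|. Then t ∈ 𝒯(X ⊸ Y) if and only if for every u ∈ 𝒯(X), the image t·u = {b | ∃a ∈ u, (a,b) ∈ t} belongs to 𝒯(Y). -/
/-- Orthogonal of a set of subsets: nonempty-intersection duality. -/
def orth {α : Type*} (T : Set (Set α)) : Set (Set α) :=
  {u' : Set α | ∀ u ∈ T, (u ∩ u').Nonempty}

/-- Direct image of a set under a relation. -/
def relIm {α β : Type*} (t : Set (α × β)) (u : Set α) : Set β :=
  {b | ∃ a ∈ u, (a, b) ∈ t}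

/-- The condition for a relation to be a NUTS morphism: it maps total sets
to total sets under direct image. -/
def isTot {α β : Type*} (TX : Set (Set α)) (TY : Set (Set β)) (t : Set (α × β)) : Prop :=
  ∀ u ∈ TX, relIm t u ∈ TY

/-- Totality of the tensor product: the upward closure of the set of products
of total sets. -/
def tensT {α β : Type*} (TX : Set (Set α)) (TY : Set (Set β)) : Set (Set (α × β)) :=
  {w | ∃ u ∈ TX, ∃ v ∈ TY, u ×ˢ v ⊆ w}

/-- Totality of the linear arrow `X ⊸ Y = (X ⊗ Y⊥)⊥`. -/
def limplT {α β : Type*} (TX : Set (Set α)) (TY : Set (Set β)) : Set (Set (α × β)) :=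
  orth (tensT TX (orth TY))

theorem inter_relIm_nonempty_iff {α β : Type*} (t : Set (α × β)) (u : Set α) (v : Set β) :
    (v ∩ relIm t u).Nonempty ↔ (u ×ˢ v ∩ t).Nonempty := by
  constructor
  · rintro ⟨b, hb, a, ha, hab⟩
    exact ⟨(a, b), ⟨ha, hb⟩, hab⟩
  · rintro ⟨⟨a, b⟩, ⟨ha, hb⟩, hab⟩
    exact ⟨b, hb, a, ha, hab⟩

/-- Since `orth` of anything is upward closed, testing `t` against the products `u ×ˢ v`
generating `tensT TX T'` suffices. -/
theorem mem_orth_tensT_iff {α β : Type*} (TX : Set (Set α)) (T' : Set (Set β))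
    (t : Set (α × β)) : t ∈ orth (tensT TX T') ↔ ∀ u ∈ TX, relIm t u ∈ orth T' := by
  constructor
  · intro ht u hu v hv
    exact (inter_relIm_nonempty_iff t u v).2 (ht _ ⟨u, hu, v, hv, subset_rfl⟩)
  · rintro h w ⟨u, hu, v, hv, huv⟩
    exact ((inter_relIm_nonempty_iff t u v).1 (h u hu v hv)).mono
      (Set.inter_subset_inter_left t huv)

theorem limpl_total_iff_general {α β : Type*} (TX : Set (Set α)) (TY : Set (Set β))
    (hY : TY = orth (orth TY)) (t : Set (α × β)) :
    t ∈ limplT TX TY ↔ ∀ u ∈ TX, relIm t u ∈ TY := by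
  rw [limplT, mem_orth_tensT_iff, ← hY]

/-- Characterization of total relations of `X ⊸ Y`:
`t ∈ 𝒯(X ⊸ Y)` iff `t` maps total sets of `X` to total sets of `Y`. -/
theorem limpl_total_iff {α β : Type*} (TX : Set (Set α)) (TY : Set (Set β))
    (hX : TX = orth (orth TX)) (hY : TY = orth (orth TY)) (t : Set (α × β)) :
    t ∈ limplT TX TY ↔ ∀ u ∈ TX, relIm t u ∈ TY :=
  limpl_total_iff_general TX TY hY t
end

section
/- Let X₁, X₂, Y be non-uniform totality spaces and t ⊆ (|X₁| × |X₂|) × |Y|. Then t is a NUTS morphism X₁ ⊗ X₂ → Y if and only if for all u₁ ∈ 𝒯(X₁) and u₂ ∈ 𝒯(X₂), t·(u₁ × u₂) ∈ 𝒯(Y). -/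
theorem isUpperSet_orth {α : Type*} (T : Set (Set α)) : IsUpperSet (orth T) :=
  fun _ _ huv hu w hw => (hu w hw).mono (Set.inter_subset_inter_right w huv)

theorem relIm_mono {α β : Type*} (t : Set (α × β)) : Monotone (relIm t) :=
  fun _ _ huv _ ⟨a, ha, hab⟩ => ⟨a, huv ha, hab⟩

theorem isTot_tensT_iff {α β γ : Type*} {TX₁ : Set (Set α)} {TX₂ : Set (Set β)}
    {TY : Set (Set γ)} (hY : IsUpperSet TY) (t : Set ((α × β) × γ)) :
    isTot (tensT TX₁ TX₂) TY t ↔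
      ∀ u₁ ∈ TX₁, ∀ u₂ ∈ TX₂, relIm t (u₁ ×ˢ u₂) ∈ TY := by
  constructor
  · intro h u₁ h₁ u₂ h₂
    exact h _ ⟨u₁, h₁, u₂, h₂, subset_rfl⟩
  · rintro h w ⟨u₁, h₁, u₂, h₂, hw⟩
    exact hY (relIm_mono t hw) (h u₁ h₁ u₂ h₂)

theorem tens_morphism_iff_general {α β γ : Type*}
    (TX₁ : Set (Set α)) (TX₂ : Set (Set β)) (TY : Set (Set γ))
    (hY : TY = orth (orth TY)) (t : Set ((α × β) × γ)) :
    isTot (tensT TX₁ TX₂) TY t ↔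
      ∀ u₁ ∈ TX₁, ∀ u₂ ∈ TX₂, relIm t (u₁ ×ˢ u₂) ∈ TY :=
  isTot_tensT_iff (hY ▸ isUpperSet_orth (orth TY)) t

/-- A relation `t ⊆ (|X₁| × |X₂|) × |Y|` is a NUTS morphism `X₁ ⊗ X₂ → Y`
iff it maps products of total sets to total sets. -/
theorem tens_morphism_iff {α β γ : Type*}
    (TX₁ : Set (Set α)) (TX₂ : Set (Set β)) (TY : Set (Set γ))
    (hX₁ : TX₁ = orth (orth TX₁)) (hX₂ : TX₂ = orth (orth TX₂))
    (hY : TY = orth (orth TY)) (t : Set ((α × β) × γ)) :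
    isTot (tensT TX₁ TX₂) TY t ↔
      ∀ u₁ ∈ TX₁, ∀ u₂ ∈ TX₂, relIm t (u₁ ×ˢ u₂) ∈ TY :=
  tens_morphism_iff_general TX₁ TX₂ TY hY t
end
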